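/- arXiv:math/0609843 — 2 statements merged into one kernel-verified Lean document; each statement's English description precedes it below -/
import Mathlib

section
/- Let Ω ⊆ Ā be non-empty and a ∈ Φ^red. Then f_Ω(a) = +∞ if and only if there exists a face F = F_Y^Δ ∈ Σ with Ω ∩ A_F ≠ ∅ such that one of the following holds: either a ∈ ⟨Y⟩ and a(Ω ∩ A_F) is unbounded from below (elements of ⟨Y⟩ being viewed as linear forms on A_F), or a ∉ ⟨Y⟩ and there exist λ ∈ Λ with [λ₀(Δ) − λ] ⊆ Y and a positive integer l such that λ + l·a ∈ Λ. -/
/-!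
Common setup for Werner, "Compactifications of Bruhat-Tits buildings associated to
linear representations":  a finite-dimensional real vector space `A` (the apartment),
a root system `Φ` in the dual space together with a Weyl-group invariant inner
product, a finite Weyl-invariant set `Λ` of (K-)weights, and for every basis `Δ`
of `Φ` a highest weight `lam0 Δ ∈ Λ`.
-/

open Pointwise Filter Topology Bornology
open scoped Classical

noncomputable section

/-- A set `M` of linear forms is *connected* if the graph with vertex set `M` and an
edge between `m` and `n` iff `inn m n ≠ 0` is connected. -/
def GraphConnected {D : Type*} (inn : D → D → ℝ) (M : Set D) : Prop :=
  ∀ m ∈ M, ∀ n ∈ M,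
    Relation.ReflTransGen (fun x y => x ∈ M ∧ y ∈ M ∧ inn x y ≠ 0) m n

/-- The coefficients of `μ` as a linear combination of the elements of `Δ` (chosen
arbitrarily if one exists; it is unique when `Δ` is linearly independent). -/
noncomputable def coeffs {A : Type*} [AddCommGroup A] [Module ℝ A]
    (Δ : Finset (Module.Dual ℝ A)) (μ : Module.Dual ℝ A) : Module.Dual ℝ A → ℝ :=
  if h : ∃ n : Module.Dual ℝ A → ℝ, μ = ∑ b ∈ Δ, n b • b then h.choose else fun _ => 0

/-- The support `[μ]` of `μ` with respect to the basis `Δ`: the set of elements of `Δ`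
whose coefficient in `μ` is nonzero. -/
noncomputable def supp {A : Type*} [AddCommGroup A] [Module ℝ A]
    (Δ : Finset (Module.Dual ℝ A)) (μ : Module.Dual ℝ A) : Finset (Module.Dual ℝ A) :=
  Δ.filter fun a => coeffs Δ μ a ≠ 0

/-- Raw data: a finite set `Φ` of roots in the dual of `A`, a product `inn` on the dual,
a finite set `Λ` of weights, and a highest weight `lam0 Δ` for every basis `Δ`. -/
structure RootWeightData (A : Type*) [NormedAddCommGroup A] [NormedSpace ℝ A]
    [FiniteDimensional ℝ A] where
  Φ : Finset (Module.Dual ℝ A)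
  inn : Module.Dual ℝ A → Module.Dual ℝ A → ℝ
  Λ : Finset (Module.Dual ℝ A)
  lam0 : Finset (Module.Dual ℝ A) → Module.Dual ℝ A

namespace RootWeightData

variable {A : Type*} [NormedAddCommGroup A] [NormedSpace ℝ A] [FiniteDimensional ℝ A]
variable (S : RootWeightData A)

/-- The reflection associated to the root `a`. -/
def refl (a : Module.Dual ℝ A) : Function.End (Module.Dual ℝ A) :=
  fun x => x - (2 * S.inn x a / S.inn a a) • a

/-- The Weyl group `W`, generated by the reflections in the roots. -/
def weyl : Submonoid (Function.End (Module.Dual ℝ A)) :=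
  Submonoid.closure {f | ∃ a ∈ S.Φ, f = S.refl a}

/-- `Δ` is a basis of the root system `Φ`: a linearly independent subset of `Φ` such
that every root is a nonnegative or nonpositive linear combination of `Δ`. -/
def IsBase (Δ : Finset (Module.Dual ℝ A)) : Prop :=
  (↑Δ : Set (Module.Dual ℝ A)) ⊆ (S.Φ : Set (Module.Dual ℝ A)) ∧
  LinearIndependent ℝ (fun a : (Δ : Set (Module.Dual ℝ A)) => (a : Module.Dual ℝ A)) ∧
  ∀ a ∈ S.Φ,
    (∃ n : Module.Dual ℝ A → ℝ, (∀ b ∈ Δ, 0 ≤ n b) ∧ a = ∑ b ∈ Δ, n b • b) ∨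
    (∃ n : Module.Dual ℝ A → ℝ, (∀ b ∈ Δ, 0 ≤ n b) ∧ a = -∑ b ∈ Δ, n b • b)

/-- `Y` is an admissible subset of the basis `Δ`: `Y ⊆ Δ` and `Y ∪ {λ₀(Δ)}` is
connected. -/
def Admissible (Δ Y : Finset (Module.Dual ℝ A)) : Prop :=
  Y ⊆ Δ ∧ GraphConnected S.inn ((↑Y : Set (Module.Dual ℝ A)) ∪ {S.lam0 Δ})

end RootWeightData

/-- The whole setting of Werner's paper: the data of `RootWeightData`, where `Φ` is a
(crystallographic, possibly non-reduced) root system spanning the dual of `A`, `inn` is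
a Weyl-invariant inner product, `Λ` is a finite Weyl-invariant set of weights, and
`lam0` picks, Weyl-equivariantly, a highest weight for each basis, dominating all of
`Λ`; moreover a subset of a basis is admissible iff it is the support of
`λ₀(Δ) - λ` for some weight `λ`. -/
structure RootWeightSystem (A : Type*) [NormedAddCommGroup A] [NormedSpace ℝ A]
    [FiniteDimensional ℝ A] extends RootWeightData A where
  inn_symm : ∀ x y, inn x y = inn y x
  inn_add_left : ∀ x y z, inn (x + y) z = inn x z + inn y z
  inn_smul_left : ∀ (c : ℝ) (x y), inn (c • x) y = c * inn x y
  inn_pos : ∀ x, x ≠ 0 → 0 < inn x x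
  root_ne_zero : ∀ a ∈ Φ, a ≠ (0 : Module.Dual ℝ A)
  neg_mem : ∀ a ∈ Φ, -a ∈ Φ
  refl_mem : ∀ a ∈ Φ, ∀ b ∈ Φ, toRootWeightData.refl a b ∈ Φ
  inn_weyl_invariant :
    ∀ w ∈ toRootWeightData.weyl, ∀ x y, inn (w x) (w y) = inn x y
  phi_spans : Submodule.span ℝ (Φ : Set (Module.Dual ℝ A)) = ⊤
  exists_base : ∃ Δ, toRootWeightData.IsBase Δ
  base_cover : ∀ x : A, ∃ Δ, toRootWeightData.IsBase Δ ∧ ∀ a ∈ Δ, 0 ≤ a x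
  base_weyl : ∀ w ∈ toRootWeightData.weyl, ∀ Δ, toRootWeightData.IsBase Δ →
    toRootWeightData.IsBase (Δ.image (w : Module.Dual ℝ A → Module.Dual ℝ A))
  lam0_mem : ∀ Δ, toRootWeightData.IsBase Δ → lam0 Δ ∈ Λ
  lam0_dominates : ∀ Δ, toRootWeightData.IsBase Δ → ∀ l ∈ Λ,
    ∃ n : Module.Dual ℝ A → ℝ, (∀ a ∈ Δ, 0 ≤ n a) ∧ lam0 Δ - l = ∑ a ∈ Δ, n a • a
  weight_weyl_invariant : ∀ w ∈ toRootWeightData.weyl, ∀ l ∈ Λ, w l ∈ Λ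
  lam0_equivariant : ∀ w ∈ toRootWeightData.weyl, ∀ Δ, toRootWeightData.IsBase Δ →
    lam0 (Δ.image (w : Module.Dual ℝ A → Module.Dual ℝ A)) = w (lam0 Δ)
  integrality : ∀ l ∈ Λ, ∀ a ∈ Φ, ∃ k : ℤ, 2 * inn l a / inn a a = (k : ℝ)
  admissible_iff_support : ∀ Δ, toRootWeightData.IsBase Δ → ∀ Y ⊆ Δ,
    (toRootWeightData.Admissible Δ Y ↔ ∃ l ∈ Λ, supp Δ (lam0 Δ - l) = Y)

namespace RootWeightSystem

variable {A : Type*} [NormedAddCommGroup A] [NormedSpace ℝ A] [FiniteDimensional ℝ A]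
variable (S : RootWeightSystem A)

/-- The face `F_Y^Δ` of the apartment `A` associated to a basis `Δ` and an admissible
subset `Y ⊆ Δ`. -/
def Face (Δ Y : Finset (Module.Dual ℝ A)) : Set A :=
  {x | (∀ a ∈ Y, a x = 0) ∧
    ∀ l ∈ S.Λ, ¬ supp Δ (S.lam0 Δ - l) ⊆ Y → 0 < (S.lam0 Δ - l) x}

/-- `F` belongs to the collection `Σ` of faces. -/
def IsFace (F : Set A) : Prop :=
  ∃ Δ Y, S.toRootWeightData.IsBase Δ ∧ S.toRootWeightData.Admissible Δ Y ∧
    F = S.Face Δ Y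

/-- The collection `Σ` of all faces. -/
def Faces : Type _ := {F : Set A // S.IsFace F}

/-- The relation identifying `(F, u)` and `(F, v)` when `u - v ∈ ⟨F⟩`; the quotient is
the disjoint union `Ā = ⊔_{F ∈ Σ} A/⟨F⟩`. -/
def AbarRel (p q : S.Faces × A) : Prop :=
  p.1 = q.1 ∧ p.2 - q.2 ∈ Submodule.span ℝ p.1.val

/-- The compactified apartment `Ā = ⊔_{F ∈ Σ} A_F`, `A_F = A/⟨F⟩`. -/
def Abar : Type _ := Quot S.AbarRel

/-- `r_F(u)`, the image of `u ∈ A` in the stratum `A_F` of `Ā`. -/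
def mkAbar (F : S.Faces) (u : A) : S.Abar := Quot.mk _ (F, u)

/-- The basic set `Γ_F(U) = ⋃_{F' ⊆ cl F} r_{F'}(U + F)` of `Ā`. -/
def Gamma (F : S.Faces) (U : Set A) : Set S.Abar :=
  {p | ∃ F' : S.Faces, F'.val ⊆ closure F.val ∧ ∃ u ∈ U + F.val, p = S.mkAbar F' u}

/-- The topology of `Ā`, generated by the sets `Γ_F(U)` for `F ∈ Σ` and `U ⊆ A`
bounded and open. -/
instance : TopologicalSpace S.Abar :=
  TopologicalSpace.generateFrom
    {V : Set S.Abar | ∃ (F : S.Faces) (U : Set A),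
      IsOpen U ∧ IsBounded U ∧ V = S.Gamma F U}

/-- `f_Ω(a) = inf {t : Ω ⊆ cl_Ā {z ∈ A : a(z) ≥ -t}} ∈ ℝ ∪ {±∞}`, where `A` is embedded
in `Ā` as the stratum of the face `F₀ = {0}`. -/
def fOmega (F₀ : S.Faces) (Ω : Set S.Abar) (a : Module.Dual ℝ A) : EReal :=
  sInf ((fun t : ℝ => (t : EReal)) ''
    {t : ℝ | Ω ⊆ closure (S.mkAbar F₀ '' {z : A | -t ≤ a z})})

end RootWeightSystem

/-!
A point `r_F(u)` of `Ā` lies in the closure of the half-space `{a ≥ -t}` of `A` as soon as `a`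
is positive somewhere on `F`, or `a` vanishes on `F` and `a(u) ≥ -t`: every neighbourhood of
`r_F(u)` contains the points `u + d + e` of `A` for one `d` and all `e` in the additive cone
generated by `F`. Conversely, if `a ≤ 0` on `F` and `a(u) < -t`, then `Γ_F(U)`, for `U` a
bounded open neighbourhood of `u` inside `{a < -t}`, separates `r_F(u)` from the half-space.
As there are finitely many faces, `f_Ω(a) = +∞` iff on some stratum `A_F` meeting `Ω` either
`a` vanishes on `F` and is unbounded below on `Ω ∩ A_F`, or `a ∉ ⟨Y⟩` and `a ≤ 0` on `F`.

For `a ∉ ⟨Y⟩`, the condition `a ≤ 0` on `F` is the weight condition. A weight `λ + k·a` with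
`[λ₀ - λ] ⊆ Y` has `λ₀ - λ - k·a ∉ ⟨Y⟩`, so it is strictly positive on `F`, whence `a < 0` there.
If there is no such weight, reflecting in `a` shows that every weight `λ` with `[λ₀ - λ] ⊆ Y` is
orthogonal to `a`; walking through the connected graph on `Y ∪ {λ₀}` and using admissibility of
every connected subset shows that `Y ⊥ a` as well. Then the reflection dual to `s_a` maps `F`
to itself and reverses the sign of `a`, so `a` vanishes on `F`, and moving a point of `F`
slightly in the direction dual to `a` stays in `F` and makes `a` positive.
-/

theorem GraphConnected.insert {D : Type*} {inn : D → D → ℝ} (hsymm : ∀ x y, inn x y = inn y x)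
    {M : Set D} (hM : GraphConnected inn M) {m m' : D} (hm' : m' ∈ M) (hedge : inn m' m ≠ 0) :
    GraphConnected inn (Insert.insert m M) := by
  have hmono : ∀ x ∈ M, ∀ y ∈ M, Relation.ReflTransGen
      (fun x y => x ∈ Insert.insert m M ∧ y ∈ Insert.insert m M ∧ inn x y ≠ 0) x y :=
    fun x hx y hy => Relation.ReflTransGen.mono (fun _ _ h => ⟨Or.inr h.1, Or.inr h.2.1, h.2.2⟩)
      _ _ (hM x hx y hy)
  rintro x (rfl | hx) y (rfl | hy)
  · exact .refl
  · exact .head ⟨Or.inl rfl, Or.inr hm', by rwa [hsymm]⟩ (hmono _ hm' _ hy)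
  · exact (hmono _ hx _ hm').tail ⟨Or.inr hm', Or.inl rfl, hedge⟩
  · exact hmono _ hx _ hy

theorem ConvexCone.exists_sub_eq_of_mem_span {E : Type*} [AddCommGroup E] [Module ℝ E]
    (C : ConvexCone ℝ E) (hC : (C : Set E).Nonempty) {x : E}
    (hx : x ∈ Submodule.span ℝ (C : Set E)) : ∃ g ∈ C, ∃ g' ∈ C, x = g - g' := by
  obtain ⟨c, hc⟩ := hC
  induction hx using Submodule.span_induction with
  | mem y hy => exact ⟨y + c, C.add_mem hy hc, c, hc, (add_sub_cancel_right y c).symm⟩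
  | zero => exact ⟨c, hc, c, hc, (sub_self c).symm⟩
  | add y z _ _ hy hz =>
    obtain ⟨g₁, hg₁, g₁', hg₁', rfl⟩ := hy
    obtain ⟨g₂, hg₂, g₂', hg₂', rfl⟩ := hz
    exact ⟨g₁ + g₂, C.add_mem hg₁ hg₂, g₁' + g₂', C.add_mem hg₁' hg₂', (add_sub_add_comm ..).symm⟩
  | smul r y _ hy =>
    obtain ⟨g, hg, g', hg', rfl⟩ := hy
    rcases lt_trichotomy r 0 with hr | rfl | hr
    · exact ⟨(-r) • g', C.smul_mem (neg_pos.2 hr) hg', (-r) • g, C.smul_mem (neg_pos.2 hr) hg,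
        by rw [neg_smul, neg_smul, neg_sub_neg, smul_sub]⟩
    · exact ⟨c, hc, c, hc, by rw [zero_smul, sub_self]⟩
    · exact ⟨r • g, C.smul_mem hr hg, r • g', C.smul_mem hr hg', smul_sub r g g'⟩

theorem exists_forall_add_mem_sInter {X β : Type*} [AddCommMonoid X] (C : AddSubmonoid X)
    (f : X → β) (u : X) {fam : Set (Set β)} (hfam : fam.Finite)
    (h : ∀ s ∈ fam, ∃ d ∈ C, ∀ e ∈ C, f (u + d + e) ∈ s) :
    ∃ d ∈ C, ∀ e ∈ C, f (u + d + e) ∈ ⋂₀ fam := by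
  induction fam, hfam using Set.Finite.induction_on with
  | empty => exact ⟨0, C.zero_mem, fun _ _ => by simp⟩
  | @insert s fam _ _ ih =>
    obtain ⟨d, hd, hde⟩ := ih fun s' hs' => h s' (Set.mem_insert_of_mem _ hs')
    obtain ⟨d', hd', hd'e⟩ := h s (Set.mem_insert _ _)
    refine ⟨d + d', C.add_mem hd hd', fun e he => Set.sInter_insert s fam ▸ ⟨?_, ?_⟩⟩
    · simpa only [add_assoc, add_left_comm d] using hd'e (d + e) (C.add_mem hd he)
    · simpa only [add_assoc] using hde (d' + e) (C.add_mem hd' he)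

theorem exists_apply_eq_of_linearIndepOn {A : Type*} [AddCommGroup A] [Module ℝ A]
    [FiniteDimensional ℝ A] {s : Set (Module.Dual ℝ A)} (hs : LinearIndepOn ℝ id s)
    (c : Module.Dual ℝ A → ℝ) : ∃ x : A, ∀ b ∈ s, b x = c b := by
  let B := Module.Basis.extend hs
  refine ⟨(Module.evalEquiv ℝ A).symm (B.constr ℝ fun i => c i), fun b hb => ?_⟩
  rw [Module.apply_evalEquiv_symm_apply]
  have hB : B ⟨b, hs.subset_extend _ hb⟩ = b := Module.Basis.extend_apply_self hs _
  conv_lhs => rw [← hB]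
  rw [Module.Basis.constr_basis]

theorem apply_eq_zero_of_mem_span {A : Type*} [AddCommGroup A] [Module ℝ A]
    {Y : Set (Module.Dual ℝ A)} {μ : Module.Dual ℝ A} (hμ : μ ∈ Submodule.span ℝ Y) {x : A}
    (hx : ∀ y ∈ Y, y x = 0) : μ x = 0 := by
  induction hμ using Submodule.span_induction with
  | mem y hy => exact hx y hy
  | zero => rfl
  | add μ ν _ _ hμ hν => simp [hμ, hν]
  | smul r μ _ hμ => simp [hμ]

section Coeffs

variable {A : Type*} [AddCommGroup A] [Module ℝ A] {Δ : Finset (Module.Dual ℝ A)}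
  {μ : Module.Dual ℝ A}

theorem coeffs_eq (hΔ : LinearIndepOn ℝ id (Δ : Set (Module.Dual ℝ A)))
    {n : Module.Dual ℝ A → ℝ} (h : μ = ∑ b ∈ Δ, n b • b) {b : Module.Dual ℝ A} (hb : b ∈ Δ) :
    coeffs Δ μ b = n b := by
  have hex : ∃ n : Module.Dual ℝ A → ℝ, μ = ∑ b ∈ Δ, n b • b := ⟨n, h⟩
  rw [coeffs, dif_pos hex]
  exact linearIndepOn_finset_iffₛ.1 hΔ _ _ (hex.choose_spec.symm.trans h) b hb

theorem supp_zero (hΔ : LinearIndepOn ℝ id (Δ : Set (Module.Dual ℝ A))) :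
    supp Δ (0 : Module.Dual ℝ A) = ∅ :=
  Finset.filter_false_of_mem fun b hb =>
    not_not.2 (coeffs_eq hΔ (n := 0) (by simp) hb)

theorem sum_supp_smul (h : ∃ n : Module.Dual ℝ A → ℝ, μ = ∑ b ∈ Δ, n b • b) :
    ∑ b ∈ supp Δ μ, coeffs Δ μ b • b = μ := by
  rw [supp, Finset.sum_filter_of_ne (p := fun b => coeffs Δ μ b ≠ 0)
    fun b _ hb hc => hb (by rw [hc, zero_smul]), coeffs, dif_pos h]
  exact h.choose_spec.symm

theorem mem_span_of_supp_subset {Y : Finset (Module.Dual ℝ A)}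
    (h : ∃ n : Module.Dual ℝ A → ℝ, μ = ∑ b ∈ Δ, n b • b) (hs : supp Δ μ ⊆ Y) :
    μ ∈ Submodule.span ℝ (Y : Set (Module.Dual ℝ A)) := by
  rw [← sum_supp_smul h]
  exact Submodule.sum_mem _ fun b hb => Submodule.smul_mem _ _ (Submodule.subset_span (hs hb))

end Coeffs

namespace RootWeightSystem

variable {A : Type*} [NormedAddCommGroup A] [NormedSpace ℝ A] [FiniteDimensional ℝ A]
  (S : RootWeightSystem A) {Δ Y : Finset (Module.Dual ℝ A)} {a l : Module.Dual ℝ A}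

def innL : Module.Dual ℝ A →ₗ[ℝ] Module.Dual ℝ A →ₗ[ℝ] ℝ :=
  LinearMap.mk₂ ℝ S.inn S.inn_add_left (fun c x y => S.inn_smul_left c x y)
    (fun x y z => by rw [S.inn_symm x, S.inn_add_left, S.inn_symm y, S.inn_symm z])
    (fun c x y => by rw [S.inn_symm, S.inn_smul_left, S.inn_symm, smul_eq_mul])

@[simp] theorem innL_apply (x y : Module.Dual ℝ A) : S.innL x y = S.inn x y := rfl

theorem inn_sub_left (x y z : Module.Dual ℝ A) : S.inn (x - y) z = S.inn x z - S.inn y z :=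
  S.innL.map_sub₂ x y z

theorem inn_sum_smul_left (s : Finset (Module.Dual ℝ A)) (c : Module.Dual ℝ A → ℝ)
    (z : Module.Dual ℝ A) : S.inn (∑ b ∈ s, c b • b) z = ∑ b ∈ s, c b * S.inn b z := by
  simp only [← innL_apply, map_sum, map_smul, LinearMap.sum_apply, LinearMap.smul_apply,
    smul_eq_mul]

def innVec (a : Module.Dual ℝ A) : A := (Module.evalEquiv ℝ A).symm (S.innL.flip a)

@[simp] theorem apply_innVec (μ a : Module.Dual ℝ A) : μ (S.innVec a) = S.inn μ a :=
  Module.apply_evalEquiv_symm_apply ℝ A μ _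

theorem inn_self_pos (ha : a ∈ S.Φ) : 0 < S.inn a a := S.inn_pos a (S.root_ne_zero a ha)

theorem inn_refl_self (ha : a ∈ S.Φ) (x : Module.Dual ℝ A) :
    S.inn (S.refl a x) a = -S.inn x a := by
  have := (S.inn_self_pos ha).ne'
  simp only [RootWeightData.refl, inn_sub_left, S.inn_smul_left]
  field_simp
  ring

theorem refl_self (ha : a ∈ S.Φ) : S.refl a a = -a := by
  simp only [RootWeightData.refl, mul_div_assoc, div_self (S.inn_self_pos ha).ne', mul_one]
  module

theorem refl_eq_self {x : Module.Dual ℝ A} (h : S.inn x a = 0) : S.refl a x = x := by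
  simp [RootWeightData.refl, h]

theorem refl_mem_weights (ha : a ∈ S.Φ) (hl : l ∈ S.Λ) : S.refl a l ∈ S.Λ :=
  S.weight_weyl_invariant _ (Submonoid.subset_closure ⟨a, ha, rfl⟩) l hl

theorem exists_add_nsmul_mem_of_inn_neg (ha : a ∈ S.Φ) (hl : l ∈ S.Λ) (hneg : S.inn l a < 0) :
    ∃ k : ℕ, 0 < k ∧ l + (k : ℝ) • a ∈ S.Λ := by
  obtain ⟨n, hn⟩ := S.integrality l hl a ha
  have hn0 : n < 0 := by
    have : 2 * S.inn l a / S.inn a a < 0 := div_neg_of_neg_of_pos (by linarith)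
      (S.inn_self_pos ha)
    exact_mod_cast hn ▸ this
  obtain ⟨k, rfl⟩ := Int.exists_eq_neg_ofNat hn0.le
  refine ⟨k, by omega, ?_⟩
  have := S.refl_mem_weights ha hl
  convert this using 1
  rw [RootWeightData.refl, hn]
  push_cast
  module

theorem exists_lam0_sub_eq_sum (hb : S.IsBase Δ) (hl : l ∈ S.Λ) :
    ∃ n : Module.Dual ℝ A → ℝ, S.lam0 Δ - l = ∑ b ∈ Δ, n b • b :=
  let ⟨n, _, h⟩ := S.lam0_dominates Δ hb l hl
  ⟨n, h⟩

theorem coeffs_lam0_sub_nonneg (hb : S.IsBase Δ) (hl : l ∈ S.Λ) {b : Module.Dual ℝ A}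
    (hbΔ : b ∈ Δ) : 0 ≤ coeffs Δ (S.lam0 Δ - l) b := by
  obtain ⟨n, hn, h⟩ := S.lam0_dominates Δ hb l hl
  exact coeffs_eq hb.2.1 h hbΔ ▸ hn b hbΔ

theorem supp_lam0_sub_self_subset (hb : S.IsBase Δ) : supp Δ (S.lam0 Δ - S.lam0 Δ) ⊆ Y := by
  rw [sub_self, supp_zero hb.2.1]
  exact Finset.empty_subset Y

theorem lam0_sub_apply_eq_zero (hb : S.IsBase Δ) (hl : l ∈ S.Λ) (hs : supp Δ (S.lam0 Δ - l) ⊆ Y)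
    {x : A} (hx : ∀ y ∈ Y, y x = 0) : (S.lam0 Δ - l) x = 0 :=
  apply_eq_zero_of_mem_span (mem_span_of_supp_subset (S.exists_lam0_sub_eq_sum hb hl) hs) hx

def faceCone (Δ Y : Finset (Module.Dual ℝ A)) : ConvexCone ℝ A where
  carrier := S.Face Δ Y
  smul_mem' c hc x hx := ⟨fun y hy => by simp [hx.1 y hy],
    fun l hl hs => by simpa using mul_pos hc (hx.2 l hl hs)⟩
  add_mem' x hx y hy := ⟨fun b hb => by simp [hx.1 b hb, hy.1 b hb],
    fun l hl hs => by rw [map_add]; exact add_pos (hx.2 l hl hs) (hy.2 l hl hs)⟩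

def closedFace (Δ Y : Finset (Module.Dual ℝ A)) : AddSubmonoid A where
  carrier := {x | (∀ y ∈ Y, y x = 0) ∧
    ∀ l ∈ S.Λ, ¬ supp Δ (S.lam0 Δ - l) ⊆ Y → 0 ≤ (S.lam0 Δ - l) x}
  add_mem' hx hy := ⟨fun b hb => by simp [hx.1 b hb, hy.1 b hb],
    fun l hl hs => by rw [map_add]; exact add_nonneg (hx.2 l hl hs) (hy.2 l hl hs)⟩
  zero_mem' := ⟨fun y _ => map_zero y, fun _ _ _ => by simp⟩

theorem face_subset_closedFace : S.Face Δ Y ⊆ S.closedFace Δ Y :=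
  fun _ hx => ⟨hx.1, fun l hl hs => (hx.2 l hl hs).le⟩

theorem isClosed_closedFace : IsClosed (S.closedFace Δ Y : Set A) := by
  have hcont : ∀ μ : Module.Dual ℝ A, Continuous μ := fun μ => μ.continuous_of_finiteDimensional
  simp only [closedFace, AddSubmonoid.coe_set_mk, AddSubsemigroup.coe_set_mk, Set.ofPred_and,
    Set.ofPred_forall]
  exact (isClosed_biInter fun y _ => isClosed_eq (hcont y) continuous_const).inter
    (isClosed_biInter fun l _ => isClosed_iInter fun _ => isClosed_le continuous_const (hcont _))

theorem closure_face_subset_closedFace : closure (S.Face Δ Y) ⊆ S.closedFace Δ Y :=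
  closure_minimal S.face_subset_closedFace S.isClosed_closedFace

theorem face_add_closedFace {x d : A} (hx : x ∈ S.Face Δ Y) (hd : d ∈ S.closedFace Δ Y) :
    x + d ∈ S.Face Δ Y :=
  ⟨fun b hb => by simp [hx.1 b hb, hd.1 b hb],
    fun l hl hs => by rw [map_add]; exact add_pos_of_pos_of_nonneg (hx.2 l hl hs) (hd.2 l hl hs)⟩

theorem zero_mem_closure_face (hne : (S.Face Δ Y).Nonempty) : (0 : A) ∈ closure (S.Face Δ Y) := by
  obtain ⟨f, hf⟩ := hne
  have hlim : Tendsto (fun c : ℝ => c • f) (𝓝[>] 0) (𝓝 0) :=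
    ((continuous_id.smul continuous_const).tendsto' 0 0 (zero_smul ℝ f)).mono_left
      nhdsWithin_le_nhds
  exact mem_closure_of_tendsto hlim
    (eventually_mem_nhdsWithin.mono fun c hc => (S.faceCone Δ Y).smul_mem hc hf)

theorem face_nonempty (hb : S.IsBase Δ) (hY : Y ⊆ Δ) : (S.Face Δ Y).Nonempty := by
  obtain ⟨x, hx⟩ := exists_apply_eq_of_linearIndepOn hb.2.1 fun b => if b ∈ Y then 0 else 1
  refine ⟨x, fun y hy => by rw [hx y (hY hy), if_pos hy], fun l hl hbad => ?_⟩
  obtain ⟨b₀, hb₀, hb₀Y⟩ := Finset.not_subset.1 hbad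
  obtain ⟨hb₀Δ, hc₀⟩ := Finset.mem_filter.1 hb₀
  rw [← sum_supp_smul (S.exists_lam0_sub_eq_sum hb hl)]
  simp only [LinearMap.sum_apply, LinearMap.smul_apply, smul_eq_mul]
  refine Finset.sum_pos' (fun b hb' => mul_nonneg ?_ ?_) ⟨b₀, hb₀, ?_⟩
  · exact S.coeffs_lam0_sub_nonneg hb hl (Finset.mem_filter.1 hb').1
  · rw [hx b (Finset.mem_filter.1 hb').1]; split_ifs <;> norm_num
  · rw [hx b₀ hb₀Δ, if_neg hb₀Y, mul_one]
    exact (S.coeffs_lam0_sub_nonneg hb hl hb₀Δ).lt_of_ne' hc₀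

theorem exists_add_smul_mem_face {x v : A} (hx : x ∈ S.Face Δ Y) (hv : ∀ y ∈ Y, y v = 0) :
    ∃ δ : ℝ, 0 < δ ∧ x + δ • v ∈ S.Face Δ Y := by
  have hev : ∀ᶠ δ in 𝓝 (0 : ℝ), ∀ l ∈ S.Λ, ¬ supp Δ (S.lam0 Δ - l) ⊆ Y →
      0 < (S.lam0 Δ - l) (x + δ • v) := by
    rw [eventually_all_finset]
    intro l hl
    by_cases hs : supp Δ (S.lam0 Δ - l) ⊆ Y
    · exact .of_forall fun _ h => (h hs).elim
    · have hcont : Continuous fun δ : ℝ => (S.lam0 Δ - l) (x + δ • v) := by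
        simp only [map_add, map_smul, smul_eq_mul]
        fun_prop
      exact (hcont.tendsto 0).eventually (lt_mem_nhds (by simpa using hx.2 l hl hs))
        |>.mono fun _ h _ => h
  obtain ⟨δ, hδ, hδpos⟩ := ((hev.filter_mono nhdsWithin_le_nhds).and
    (self_mem_nhdsWithin (s := Set.Ioi 0))).exists
  exact ⟨δ, hδpos, fun y hy => by simp [hx.1 y hy, hv y hy], hδ⟩

def coreflect (a : Module.Dual ℝ A) (x : A) : A := x - (2 * a x / S.inn a a) • S.innVec a

theorem apply_coreflect (μ : Module.Dual ℝ A) (x : A) :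
    μ (S.coreflect a x) = S.refl a μ x := by
  simp only [coreflect, RootWeightData.refl, map_sub, map_smul, apply_innVec, smul_eq_mul,
    LinearMap.sub_apply, LinearMap.smul_apply]
  ring

theorem coreflect_mem_face (hb : S.IsBase Δ) (ha : a ∈ S.Φ)
    (hgood : ∀ l ∈ S.Λ, supp Δ (S.lam0 Δ - l) ⊆ Y → S.inn l a = 0)
    (hY : ∀ y ∈ Y, S.inn y a = 0) {x : A} (hx : x ∈ S.Face Δ Y) :
    S.coreflect a x ∈ S.Face Δ Y := by
  have hlam0 := hgood _ (S.lam0_mem Δ hb) (S.supp_lam0_sub_self_subset hb)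
  refine ⟨fun y hy => by rw [apply_coreflect, S.refl_eq_self (hY y hy)]; exact hx.1 y hy,
    fun l hl hbad => ?_⟩
  have hbad' : ¬ supp Δ (S.lam0 Δ - S.refl a l) ⊆ Y := fun hs => by
    have h0 := hgood _ (S.refl_mem_weights ha hl) hs
    rw [S.inn_refl_self ha, neg_eq_zero] at h0
    exact hbad (S.refl_eq_self h0 ▸ hs)
  have := hx.2 _ (S.refl_mem_weights ha hl) hbad'
  rw [LinearMap.sub_apply] at this ⊢
  rwa [apply_coreflect, apply_coreflect, S.refl_eq_self hlam0]

theorem inn_eq_zero_of_supp_subset (hb : S.IsBase Δ) (ha : a ∈ S.Φ) {x : A}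
    (hx : x ∈ S.Face Δ Y) (hax : a x ≤ 0)
    (hno : ∀ l ∈ S.Λ, supp Δ (S.lam0 Δ - l) ⊆ Y → ∀ k : ℕ, 0 < k → l + (k : ℝ) • a ∉ S.Λ)
    (hl : l ∈ S.Λ) (hs : supp Δ (S.lam0 Δ - l) ⊆ Y) : S.inn l a = 0 := by
  have hnonneg : ∀ l ∈ S.Λ, supp Δ (S.lam0 Δ - l) ⊆ Y → 0 ≤ S.inn l a :=
    fun l hl hs => not_lt.1 fun hneg =>
      let ⟨k, hk, hlk⟩ := S.exists_add_nsmul_mem_of_inn_neg ha hl hneg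
      hno l hl hs k hk hlk
  refine le_antisymm (not_lt.1 fun hpos => ?_) (hnonneg l hl hs)
  have hbad : ¬ supp Δ (S.lam0 Δ - S.refl a l) ⊆ Y := fun hs' => by
    have := hnonneg _ (S.refl_mem_weights ha hl) hs'
    rw [S.inn_refl_self ha] at this
    linarith
  have h1 := hx.2 _ (S.refl_mem_weights ha hl) hbad
  have h0 := S.lam0_sub_apply_eq_zero hb hl hs hx.1
  have hc : 0 < 2 * S.inn l a / S.inn a a := by have := S.inn_self_pos ha; positivity
  simp only [RootWeightData.refl, LinearMap.sub_apply, LinearMap.smul_apply, smul_eq_mul] at h1 h0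
  nlinarith

theorem admissible_empty : S.Admissible Δ ∅ :=
  ⟨Finset.empty_subset _, fun m hm n hn => by
    simp only [Finset.coe_empty, Set.empty_union, Set.mem_singleton_iff] at hm hn
    subst hm hn
    exact .refl⟩

theorem inn_eq_zero_of_admissible_insert (hb : S.IsBase Δ) {m : Module.Dual ℝ A}
    {Y' : Finset (Module.Dual ℝ A)} (hadm : S.Admissible Δ (insert m Y')) (hm : m ∉ Y')
    (hY' : ∀ y ∈ Y', S.inn y a = 0) (hlam0 : S.inn (S.lam0 Δ) a = 0)
    (hgood : ∀ l ∈ S.Λ, supp Δ (S.lam0 Δ - l) = insert m Y' → S.inn l a = 0) :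
    S.inn m a = 0 := by
  obtain ⟨l, hl, hsupp⟩ := (S.admissible_iff_support Δ hb _ hadm.1).1 hadm
  have hsum := S.inn_sum_smul_left (supp Δ (S.lam0 Δ - l)) (coeffs Δ (S.lam0 Δ - l)) a
  rw [sum_supp_smul (S.exists_lam0_sub_eq_sum hb hl), inn_sub_left, hlam0, hgood l hl hsupp,
    hsupp, Finset.sum_insert hm, Finset.sum_eq_zero fun y hy => by rw [hY' y hy, mul_zero],
    add_zero, sub_zero, eq_comm, mul_eq_zero] at hsum
  have hmem : m ∈ supp Δ (S.lam0 Δ - l) := hsupp ▸ Finset.mem_insert_self m Y'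
  exact hsum.resolve_left (Finset.mem_filter.1 hmem).2

theorem inn_eq_zero_of_admissible (hb : S.IsBase Δ) (hadm : S.Admissible Δ Y)
    (hgood : ∀ l ∈ S.Λ, supp Δ (S.lam0 Δ - l) ⊆ Y → S.inn l a = 0) :
    ∀ y ∈ Y, S.inn y a = 0 := by
  have hlam0 := hgood _ (S.lam0_mem Δ hb) (S.supp_lam0_sub_self_subset hb)
  have key : ∀ m, Relation.ReflTransGen (fun x y => x ∈ (↑Y ∪ {S.lam0 Δ} : Set _) ∧
      y ∈ (↑Y ∪ {S.lam0 Δ} : Set _) ∧ S.inn x y ≠ 0) (S.lam0 Δ) m →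
      ∃ Y' ⊆ Y, S.Admissible Δ Y' ∧ (∀ y ∈ Y', S.inn y a = 0) ∧ (m ∈ Y' ∨ m = S.lam0 Δ) := by
    intro m hm
    induction hm with
    | refl => exact ⟨∅, Finset.empty_subset _, S.admissible_empty, by simp, Or.inr rfl⟩
    | @tail m' m _ hedge ih =>
      obtain ⟨Y', hY'Y, hadm', hY', hm'⟩ := ih
      rcases hedge.2.1 with hmY | hm
      · by_cases hmY' : m ∈ Y'
        · exact ⟨Y', hY'Y, hadm', hY', Or.inl hmY'⟩
        have hsub : insert m Y' ⊆ Y := Finset.insert_subset hmY hY'Y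
        have hadm'' : S.Admissible Δ (insert m Y') := by
          refine ⟨hsub.trans hadm.1, ?_⟩
          rw [Finset.coe_insert, Set.insert_union]
          exact hadm'.2.insert S.inn_symm hm' hedge.2.2
        have hma := S.inn_eq_zero_of_admissible_insert hb hadm'' hmY' hY' hlam0
          fun l hl hs => hgood l hl (hs ▸ hsub)
        exact ⟨insert m Y', hsub, hadm'', (Finset.forall_mem_insert _ _ _).2 ⟨hma, hY'⟩,
          Or.inl (Finset.mem_insert_self m Y')⟩
      · exact ⟨Y', hY'Y, hadm', hY', Or.inr hm⟩
  intro y hy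
  obtain ⟨Y', -, -, hY', hy' | rfl⟩ := key y (hadm.2 _ (Or.inr rfl) y (Or.inl hy))
  exacts [hY' y hy', hlam0]

theorem exists_add_nsmul_mem_of_nonpos_on_face (hb : S.IsBase Δ) (hadm : S.Admissible Δ Y)
    (ha : a ∈ S.Φ) (hnonpos : ∀ x ∈ S.Face Δ Y, a x ≤ 0) :
    ∃ l ∈ S.Λ, supp Δ (S.lam0 Δ - l) ⊆ Y ∧ ∃ k : ℕ, 0 < k ∧ l + (k : ℝ) • a ∈ S.Λ := by
  by_contra hno
  push Not at hno
  obtain ⟨x, hx⟩ := S.face_nonempty hb hadm.1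
  have hgood := fun l => S.inn_eq_zero_of_supp_subset (l := l) hb ha hx (hnonpos x hx) hno
  have hY := S.inn_eq_zero_of_admissible hb hadm hgood
  have hax : a x = 0 := by
    have := hnonpos _ (S.coreflect_mem_face hb ha hgood hY hx)
    rw [apply_coreflect, S.refl_self ha, LinearMap.neg_apply] at this
    linarith [hnonpos x hx]
  obtain ⟨δ, hδ, hxδ⟩ := S.exists_add_smul_mem_face hx (v := S.innVec a) fun y hy => by
    rw [apply_innVec, hY y hy]
  have := hnonpos _ hxδ
  rw [map_add, map_smul, apply_innVec, hax, zero_add, smul_eq_mul] at this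
  exact (mul_pos hδ (S.inn_self_pos ha)).not_ge this

theorem apply_neg_of_add_nsmul_mem (hb : S.IsBase Δ)
    (hspan : a ∉ Submodule.span ℝ (Y : Set (Module.Dual ℝ A))) (hl : l ∈ S.Λ)
    (hs : supp Δ (S.lam0 Δ - l) ⊆ Y) {k : ℕ} (hk : 0 < k) (hlk : l + (k : ℝ) • a ∈ S.Λ)
    {x : A} (hx : x ∈ S.Face Δ Y) : a x < 0 := by
  have hbad : ¬ supp Δ (S.lam0 Δ - (l + (k : ℝ) • a)) ⊆ Y := fun hs' => hspan <| by
    have hka := sub_mem (mem_span_of_supp_subset (S.exists_lam0_sub_eq_sum hb hl) hs)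
      (mem_span_of_supp_subset (S.exists_lam0_sub_eq_sum hb hlk) hs')
    rw [sub_sub_sub_cancel_left, add_sub_cancel_left] at hka
    exact (Submodule.smul_mem_iff _ (by positivity)).1 hka
  have h1 := hx.2 _ hlk hbad
  have h0 := S.lam0_sub_apply_eq_zero hb hl hs hx.1
  rw [← sub_sub, LinearMap.sub_apply, h0, LinearMap.smul_apply, smul_eq_mul] at h1
  have hk' : (0 : ℝ) < k := by exact_mod_cast hk
  nlinarith

instance : Finite S.Faces := by
  refine Set.Finite.to_subtype (((S.Φ.powerset ×ˢ S.Φ.powerset).finite_toSet.image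
    fun p => S.Face p.1 p.2).subset ?_)
  rintro F ⟨Δ, Y, hb, hadm, rfl⟩
  refine ⟨(Δ, Y), ?_, rfl⟩
  simp only [Finset.coe_product, Set.mem_prod, Finset.mem_coe, Finset.mem_powerset]
  exact ⟨hb.1, hadm.1.trans hb.1⟩

theorem abarRel_equivalence : Equivalence S.AbarRel where
  refl _ := ⟨rfl, by simp⟩
  symm h := ⟨h.1.symm, by rw [← h.1, ← neg_sub]; exact Submodule.neg_mem _ h.2⟩
  trans h h' := ⟨h.1.trans h'.1, by rw [← sub_add_sub_cancel]; exact add_mem h.2 (h.1 ▸ h'.2)⟩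

theorem mkAbar_eq_iff {F G : S.Faces} {u v : A} :
    S.mkAbar F u = S.mkAbar G v ↔ F = G ∧ u - v ∈ Submodule.span ℝ F.val :=
  Quot.eq.trans S.abarRel_equivalence.eqvGen_iff

theorem mem_gamma_iff {F G : S.Faces} {U : Set A} {u : A} :
    S.mkAbar F u ∈ S.Gamma G U ↔
      F.val ⊆ closure G.val ∧ ∃ w ∈ U + G.val, u - w ∈ Submodule.span ℝ F.val := by
  constructor
  · rintro ⟨F', hF', w, hw, heq⟩
    obtain ⟨rfl, huw⟩ := S.mkAbar_eq_iff.1 heq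
    exact ⟨hF', w, hw, huw⟩
  · rintro ⟨hF, w, hw, huw⟩
    exact ⟨F, hF, w, hw, S.mkAbar_eq_iff.2 ⟨rfl, huw⟩⟩

theorem mkAbar_mem_gamma_iff_of_eq_zero {F₀ G : S.Faces} (hF₀ : F₀.val = ({0} : Set A))
    (hG : (0 : A) ∈ closure G.val) {U : Set A} {z : A} :
    S.mkAbar F₀ z ∈ S.Gamma G U ↔ z ∈ U + G.val := by
  simp [mem_gamma_iff, hF₀, hG, sub_eq_zero]

theorem isOpen_gamma (F : S.Faces) {U : Set A} (hU : IsOpen U) (hUb : IsBounded U) :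
    IsOpen (S.Gamma F U) :=
  TopologicalSpace.isOpen_generateFrom_of_mem ⟨F, U, hU, hUb, rfl⟩

variable {F₀ F : S.Faces} {u : A}

theorem exists_forall_mkAbar_mem_gamma (hF₀ : F₀.val = ({0} : Set A))
    (hF : F.val = S.Face Δ Y) (hne : (S.Face Δ Y).Nonempty) {G : S.Faces} {U : Set A} (hu : S.mkAbar F u ∈ S.Gamma G U) :
    ∃ d ∈ AddSubmonoid.closure (S.Face Δ Y), ∀ e ∈ AddSubmonoid.closure (S.Face Δ Y),
      S.mkAbar F₀ (u + d + e) ∈ S.Gamma G U := by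
  obtain ⟨hFG, _, ⟨v, hv, f, hf, rfl⟩, huw⟩ := S.mem_gamma_iff.1 hu
  rw [hF] at hFG huw
  obtain ⟨g, hg, g', hg', hgg⟩ := (S.faceCone Δ Y).exists_sub_eq_of_mem_span hne huw
  obtain ⟨Δ', Y', -, -, hG⟩ := G.2
  have hcl : AddSubmonoid.closure (S.Face Δ Y) ≤ S.closedFace Δ' Y' :=
    AddSubmonoid.closure_le.2 (hFG.trans (hG ▸ S.closure_face_subset_closedFace))
  have hG0 : (0 : A) ∈ closure G.val :=
    closure_minimal hFG isClosed_closure (S.zero_mem_closure_face hne)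
  refine ⟨g', AddSubmonoid.subset_closure hg', fun e he =>
    (S.mkAbar_mem_gamma_iff_of_eq_zero hF₀ hG0).2 ⟨v, hv, f + (g + e), ?_, ?_⟩⟩
  · rw [hG] at hf ⊢
    exact S.face_add_closedFace hf (hcl (add_mem (AddSubmonoid.subset_closure hg) he))
  · change v + (f + (g + e)) = u + g' + e
    rw [← sub_add_cancel u (v + f), show u - (v + f) = g - g' from hgg]
    abel

theorem exists_forall_mkAbar_mem_of_mem_nhds (hF₀ : F₀.val = ({0} : Set A))
    (hF : F.val = S.Face Δ Y) (hne : (S.Face Δ Y).Nonempty) {o : Set S.Abar} (ho : o ∈ 𝓝 (S.mkAbar F u)) :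
    ∃ d ∈ AddSubmonoid.closure (S.Face Δ Y), ∀ e ∈ AddSubmonoid.closure (S.Face Δ Y),
      S.mkAbar F₀ (u + d + e) ∈ o := by
  obtain ⟨_, ⟨fam, ⟨hfin, hsub⟩, rfl⟩, hp, hfamo⟩ :=
    (TopologicalSpace.isTopologicalBasis_of_subbasis rfl).mem_nhds_iff.1 ho
  obtain ⟨d, hd, hde⟩ := exists_forall_add_mem_sInter _ (S.mkAbar F₀) u hfin fun s hs => by
    obtain ⟨G, U, -, -, rfl⟩ := hsub hs
    exact S.exists_forall_mkAbar_mem_gamma hF₀ hF hne (hp _ hs)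
  exact ⟨d, hd, fun e he => hfamo (hde e he)⟩

theorem mkAbar_mem_closure (hF₀ : F₀.val = ({0} : Set A)) (hF : F.val = S.Face Δ Y) {fs : A}
    (hfs : fs ∈ S.Face Δ Y) {t : ℝ}
    (h : 0 < a fs ∨ (a ∈ Submodule.span ℝ (Y : Set (Module.Dual ℝ A)) ∧ -t ≤ a u)) :
    S.mkAbar F u ∈ closure (S.mkAbar F₀ '' {z : A | -t ≤ a z}) := by
  refine mem_closure_iff_nhds.2 fun o ho => ?_
  obtain ⟨d, hd, hde⟩ := S.exists_forall_mkAbar_mem_of_mem_nhds hF₀ hF ⟨fs, hfs⟩ ho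
  obtain ⟨e, he, hae⟩ : ∃ e ∈ AddSubmonoid.closure (S.Face Δ Y), -t ≤ a (u + d + e) := by
    rcases h with hpos | ⟨hspan, hu⟩
    · set r := (|t + a (u + d)| + 1) / a fs
      have hr : 0 < r := by positivity
      refine ⟨r • fs, AddSubmonoid.subset_closure ((S.faceCone Δ Y).smul_mem hr hfs), ?_⟩
      rw [map_add, map_smul, smul_eq_mul, div_mul_cancel₀ _ hpos.ne']
      linarith [neg_abs_le (t + a (u + d))]
    · have had : a d = 0 := apply_eq_zero_of_mem_span hspan
        ((AddSubmonoid.closure_le.2 S.face_subset_closedFace) hd).1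
      exact ⟨0, zero_mem _, by simpa [had] using hu⟩
  exact ⟨_, hde e he, _, hae, rfl⟩

theorem mkAbar_notMem_closure (hF₀ : F₀.val = ({0} : Set A)) (hF : F.val = S.Face Δ Y)
    (hne : (S.Face Δ Y).Nonempty) (hnonpos : ∀ x ∈ S.Face Δ Y, a x ≤ 0) {t : ℝ} (hu : a u < -t) :
    S.mkAbar F u ∉ closure (S.mkAbar F₀ '' {z : A | -t ≤ a z}) := by
  obtain ⟨f, hf⟩ := hne
  set U := Metric.ball u 1 ∩ {v : A | a v < -t}
  have hU : IsOpen U := Metric.isOpen_ball.inter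
    (isOpen_lt a.continuous_of_finiteDimensional continuous_const)
  have hmem : S.mkAbar F u ∈ S.Gamma F U := S.mem_gamma_iff.2 ⟨subset_closure, u + f,
    Set.add_mem_add ⟨Metric.mem_ball_self one_pos, hu⟩ (hF ▸ hf),
    by simpa using Submodule.subset_span (hF ▸ hf)⟩
  intro hcl
  obtain ⟨_, hΓ, z, hz, rfl⟩ :=
    mem_closure_iff.1 hcl _ (S.isOpen_gamma F hU (Metric.isBounded_ball.subset
      Set.inter_subset_left)) hmem
  obtain ⟨v, hv, f', hf', rfl⟩ := (S.mkAbar_mem_gamma_iff_of_eq_zero hF₀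
    (hF ▸ S.zero_mem_closure_face ⟨f, hf⟩)).1 hΓ
  have hv' : a v < -t := hv.2
  have hz' : -t ≤ a v + a f' := by simpa using hz
  linarith [hnonpos f' (hF ▸ hf')]

def StratumEscapes (Ω : Set S.Abar) (a : Module.Dual ℝ A) (F : S.Faces)
    (Δ Y : Finset (Module.Dual ℝ A)) : Prop :=
  (a ∈ Submodule.span ℝ (Y : Set (Module.Dual ℝ A)) ∧
      ∀ M : ℝ, ∃ p ∈ Ω, ∃ u : A, p = S.mkAbar F u ∧ a u < M) ∨
    (a ∉ Submodule.span ℝ (Y : Set (Module.Dual ℝ A)) ∧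
      ∃ l ∈ S.Λ, supp Δ (S.lam0 Δ - l) ⊆ Y ∧ ∃ k : ℕ, 0 < k ∧ l + (k : ℝ) • a ∈ S.Λ)

theorem exists_notMem_closure (hF₀ : F₀.val = ({0} : Set A)) (hb : S.IsBase Δ)
    (hadm : S.Admissible Δ Y) (hF : F.val = S.Face Δ Y) {Ω : Set S.Abar}
    (hΩF : ∃ p ∈ Ω, ∃ u : A, p = S.mkAbar F u) (h : S.StratumEscapes Ω a F Δ Y) (t : ℝ) :
    ∃ p ∈ Ω, p ∉ closure (S.mkAbar F₀ '' {z : A | -t ≤ a z}) := by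
  have hne := S.face_nonempty hb hadm.1
  rcases h with ⟨hspan, hunb⟩ | ⟨hspan, l, hl, hs, k, hk, hlk⟩
  · obtain ⟨p, hp, u, rfl, hu⟩ := hunb (-t)
    exact ⟨_, hp, S.mkAbar_notMem_closure hF₀ hF hne
      (fun x hx => (apply_eq_zero_of_mem_span hspan hx.1).le) hu⟩
  · have hneg : ∀ x ∈ S.Face Δ Y, a x < 0 := fun x hx =>
      S.apply_neg_of_add_nsmul_mem hb hspan hl hs hk hlk hx
    obtain ⟨p, hp, u, rfl⟩ := hΩF
    obtain ⟨f, hf⟩ := hne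
    set s := -(a u + t + 1) / a f
    have hshift : S.mkAbar F u = S.mkAbar F (u + s • f) := S.mkAbar_eq_iff.2
      ⟨rfl, by simpa using Submodule.smul_mem _ s (Submodule.subset_span (hF ▸ hf))⟩
    refine ⟨_, hp, hshift ▸ S.mkAbar_notMem_closure hF₀ hF ⟨f, hf⟩
      (fun x hx => (hneg x hx).le) ?_⟩
    rw [map_add, map_smul, smul_eq_mul, div_mul_cancel₀ _ (hneg f hf).ne]
    linarith

theorem exists_forall_mem_closure (hF₀ : F₀.val = ({0} : Set A)) (ha : a ∈ S.Φ)
    (hb : S.IsBase Δ) (hadm : S.Admissible Δ Y) (hF : F.val = S.Face Δ Y) {Ω : Set S.Abar}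
    (h : ¬ S.StratumEscapes Ω a F Δ Y) :
    ∃ t₀ : ℝ, ∀ t ≥ t₀, ∀ u : A, S.mkAbar F u ∈ Ω →
      S.mkAbar F u ∈ closure (S.mkAbar F₀ '' {z : A | -t ≤ a z}) := by
  by_cases hspan : a ∈ Submodule.span ℝ (Y : Set (Module.Dual ℝ A))
  · obtain ⟨M, hM⟩ : ∃ M : ℝ, ∀ u : A, S.mkAbar F u ∈ Ω → M ≤ a u := by
      by_contra! hunb
      exact h (Or.inl ⟨hspan, fun M =>
        let ⟨u, hu, hlt⟩ := hunb M
        ⟨_, hu, u, rfl, hlt⟩⟩)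
    obtain ⟨fs, hfs⟩ := S.face_nonempty hb hadm.1
    exact ⟨-M, fun t ht u hu =>
      S.mkAbar_mem_closure hF₀ hF hfs (Or.inr ⟨hspan, by linarith [hM u hu]⟩)⟩
  · obtain ⟨fs, hfs, hpos⟩ : ∃ x ∈ S.Face Δ Y, 0 < a x := by
      by_contra! hnonpos
      exact h (Or.inr ⟨hspan, S.exists_add_nsmul_mem_of_nonpos_on_face hb hadm ha hnonpos⟩)
    exact ⟨0, fun t _ u _ => S.mkAbar_mem_closure hF₀ hF hfs (Or.inl hpos)⟩

theorem fOmega_eq_top_iff_forall_not_subset (F₀ : S.Faces) (Ω : Set S.Abar)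
    (a : Module.Dual ℝ A) :
    S.fOmega F₀ Ω a = ⊤ ↔ ∀ t : ℝ, ¬ Ω ⊆ closure (S.mkAbar F₀ '' {z : A | -t ≤ a z}) := by
  simp [fOmega, sInf_eq_top]

end RootWeightSystem

variable {A : Type*} [NormedAddCommGroup A] [NormedSpace ℝ A] [FiniteDimensional ℝ A]

theorem fOmega_eq_top_iff_general (S : RootWeightSystem A)
    (F₀ : S.Faces) (hF₀ : F₀.val = ({0} : Set A))
    (Ω : Set S.Abar)
    (a : Module.Dual ℝ A) (ha : a ∈ S.Φ) :
    S.fOmega F₀ Ω a = ⊤ ↔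
      ∃ (F : S.Faces) (Δ Y : Finset (Module.Dual ℝ A)),
        S.toRootWeightData.IsBase Δ ∧ S.toRootWeightData.Admissible Δ Y ∧
        F.val = S.Face Δ Y ∧ (∃ p ∈ Ω, ∃ u : A, p = S.mkAbar F u) ∧
        ((a ∈ Submodule.span ℝ ((Y : Set (Module.Dual ℝ A))) ∧
            ∀ M : ℝ, ∃ p ∈ Ω, ∃ u : A, p = S.mkAbar F u ∧ a u < M) ∨
          (a ∉ Submodule.span ℝ ((Y : Set (Module.Dual ℝ A))) ∧
            ∃ l ∈ S.Λ, supp Δ (S.lam0 Δ - l) ⊆ Y ∧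
              ∃ k : ℕ, 0 < k ∧ l + (k : ℝ) • a ∈ S.Λ)) := by
  rw [S.fOmega_eq_top_iff_forall_not_subset]
  constructor
  · intro hnot
    by_contra hRHS
    have hbound : ∀ F : S.Faces, ∃ t₀ : ℝ, ∀ t ≥ t₀, ∀ u : A, S.mkAbar F u ∈ Ω →
        S.mkAbar F u ∈ closure (S.mkAbar F₀ '' {z : A | -t ≤ a z}) := by
      intro F
      obtain ⟨Δ, Y, hb, hadm, hF⟩ := F.2
      by_cases hΩF : ∃ p ∈ Ω, ∃ u : A, p = S.mkAbar F u
      · exact S.exists_forall_mem_closure hF₀ ha hb hadm hF fun h =>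
          hRHS ⟨F, Δ, Y, hb, hadm, hF, hΩF, h⟩
      · exact ⟨0, fun t _ u hu => (hΩF ⟨_, hu, u, rfl⟩).elim⟩
    choose t₀ ht₀ using hbound
    obtain ⟨t, ht⟩ := (Set.finite_range t₀).bddAbove
    refine hnot t fun p hp => ?_
    obtain ⟨⟨F, u⟩, rfl⟩ := Quot.exists_rep p
    exact ht₀ F t (ht ⟨F, rfl⟩) u hp
  · rintro ⟨F, Δ, Y, hb, hadm, hF, hΩF, h⟩ t hsub
    obtain ⟨p, hp, hpt⟩ := S.exists_notMem_closure hF₀ hb hadm hF hΩF h t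
    exact hpt (hsub hp)

/-- For non-empty `Ω ⊆ Ā` and a non-divisible root `a`, one has
`f_Ω(a) = +∞` iff there is a face `F = F_Y^Δ` whose stratum meets `Ω` such that
either `a ∈ ⟨Y⟩` and `a(Ω ∩ A_F)` is unbounded from below, or `a ∉ ⟨Y⟩` and there
are `λ ∈ Λ` with `[λ₀(Δ) - λ] ⊆ Y` and a positive integer `l` with `λ + l·a ∈ Λ`. -/
theorem fOmega_eq_top_iff (S : RootWeightSystem A)
    (F₀ : S.Faces) (hF₀ : F₀.val = ({0} : Set A))
    (Ω : Set S.Abar) (hΩ : Ω.Nonempty)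
    (a : Module.Dual ℝ A) (ha : a ∈ S.Φ) (hared : (2⁻¹ : ℝ) • a ∉ S.Φ) :
    S.fOmega F₀ Ω a = ⊤ ↔
      ∃ (F : S.Faces) (Δ Y : Finset (Module.Dual ℝ A)),
        S.toRootWeightData.IsBase Δ ∧ S.toRootWeightData.Admissible Δ Y ∧
        F.val = S.Face Δ Y ∧ (∃ p ∈ Ω, ∃ u : A, p = S.mkAbar F u) ∧
        ((a ∈ Submodule.span ℝ ((Y : Set (Module.Dual ℝ A))) ∧
            ∀ M : ℝ, ∃ p ∈ Ω, ∃ u : A, p = S.mkAbar F u ∧ a u < M) ∨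
          (a ∉ Submodule.span ℝ ((Y : Set (Module.Dual ℝ A))) ∧
            ∃ l ∈ S.Λ, supp Δ (S.lam0 Δ - l) ⊆ Y ∧
              ∃ k : ℕ, 0 < k ∧ l + (k : ℝ) • a ∈ S.Λ)) :=
  fOmega_eq_top_iff_general S F₀ hF₀ Ω a ha
end
end

section
/- Let Δ be a basis of Φ and Y ⊆ Δ admissible. Then F_Y^Δ ∩ C̃(Δ) = ∪_Z E_Z, where the union runs over all subsets Z ⊆ Δ such that Y is the maximal admissible subset of Z. In particular, F_Y^Δ ∩ C̃(Δ) contains E_Y. -/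
/-!
Common setup for Werner, "Compactifications of Bruhat-Tits buildings associated to
linear representations":  a finite-dimensional real vector space `A` (the apartment),
a root system `Φ` in the dual space together with a Weyl-group invariant inner
product, a finite Weyl-invariant set `Λ` of (K-)weights, and for every basis `Δ`
of `Φ` a highest weight `lam0 Δ ∈ Λ`.
-/

open Pointwise Filter Topology Bornology
open scoped Classical

noncomputable section

variable {A : Type*} [NormedAddCommGroup A] [NormedSpace ℝ A] [FiniteDimensional ℝ A]

/-- The closed Weyl chamber `C̃(Δ) = {x ∈ A : a(x) ≥ 0 for all a ∈ Δ}`. -/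
def Ctilde {A : Type*} [NormedAddCommGroup A] [NormedSpace ℝ A]
    [FiniteDimensional ℝ A] (Δ : Finset (Module.Dual ℝ A)) : Set A :=
  {x : A | ∀ a ∈ Δ, 0 ≤ a x}

/-- The chamber face `E_Z = {x : a(x) = 0 ∀ a ∈ Z, a(x) > 0 ∀ a ∈ Δ \ Z}`. -/
def chamberFace {A : Type*} [NormedAddCommGroup A] [NormedSpace ℝ A]
    [FiniteDimensional ℝ A] (Δ Z : Finset (Module.Dual ℝ A)) : Set A :=
  {x : A | (∀ a ∈ Z, a x = 0) ∧ ∀ a ∈ Δ, a ∉ Z → 0 < a x}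


section AuxLemmas

omit [FiniteDimensional ℝ A] in
lemma coeffs_spec' (Δ : Finset (Module.Dual ℝ A)) (μ : Module.Dual ℝ A)
    (h : ∃ n : Module.Dual ℝ A → ℝ, μ = ∑ b ∈ Δ, n b • b) :
    μ = ∑ b ∈ Δ, coeffs Δ μ b • b := by
  rw [coeffs, dif_pos h]
  exact h.choose_spec

omit [FiniteDimensional ℝ A] in
lemma coeffs_unique' (Δ : Finset (Module.Dual ℝ A))
    (hli : LinearIndependent ℝ
      (fun a : (Δ : Set (Module.Dual ℝ A)) => (a : Module.Dual ℝ A)))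
    (n m : Module.Dual ℝ A → ℝ)
    (h : (∑ b ∈ Δ, n b • b : Module.Dual ℝ A) = ∑ b ∈ Δ, m b • b) :
    ∀ a ∈ Δ, n a = m a := by
  have h0 : (∑ b ∈ Δ, (n b - m b) • b : Module.Dual ℝ A) = 0 := by
    have : (∑ b ∈ Δ, (n b - m b) • b : Module.Dual ℝ A)
        = ∑ b ∈ Δ, n b • b - ∑ b ∈ Δ, m b • b := by
      rw [← Finset.sum_sub_distrib]
      exact Finset.sum_congr rfl fun b _ => by module
    rw [this, h, sub_self]
  intro a ha
  have hsum : (∑ i : (Δ : Set (Module.Dual ℝ A)),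
      (n i.1 - m i.1) • (i.1 : Module.Dual ℝ A)) = 0 := by
    rw [← h0]
    exact Finset.sum_attach Δ (fun b => (n b - m b) • b)
  have := linearIndependent_iff'.mp hli Finset.univ
      (fun i => n i.1 - m i.1) (by simpa using hsum)
      ⟨a, by simpa using ha⟩ (Finset.mem_univ _)
  simpa [sub_eq_zero] using this

/-- Key facts about the coefficients of `λ₀(Δ) - l`. -/
lemma coeffs_key (S : RootWeightSystem A) (Δ : Finset (Module.Dual ℝ A))
    (hΔ : S.toRootWeightData.IsBase Δ) (l : Module.Dual ℝ A) (hl : l ∈ S.Λ) :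
    (∀ a ∈ Δ, 0 ≤ coeffs Δ (S.lam0 Δ - l) a) ∧
    ∀ x : A, (S.lam0 Δ - l) x
      = ∑ a ∈ supp Δ (S.lam0 Δ - l), coeffs Δ (S.lam0 Δ - l) a * a x := by
  obtain ⟨n, hn0, hn⟩ := S.lam0_dominates Δ hΔ l hl
  set μ := S.lam0 Δ - l with hμ
  have hex : ∃ n : Module.Dual ℝ A → ℝ, μ = ∑ b ∈ Δ, n b • b := ⟨n, hn⟩
  have hspec := coeffs_spec' Δ μ hex
  have huniq : ∀ a ∈ Δ, coeffs Δ μ a = n a :=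
    coeffs_unique' Δ hΔ.2.1 _ _ (hspec.symm.trans hn)
  constructor
  · intro a ha; rw [huniq a ha]; exact hn0 a ha
  · intro x
    have h1 : μ x = ∑ a ∈ Δ, coeffs Δ μ a * a x := by
      conv_lhs => rw [hspec]
      simp [LinearMap.sum_apply, LinearMap.smul_apply, smul_eq_mul]
    rw [h1]
    refine (Finset.sum_subset (Finset.filter_subset _ _) ?_).symm
    intro a ha hna
    have : coeffs Δ μ a = 0 := by
      by_contra hc
      exact hna (Finset.mem_filter.mpr ⟨ha, hc⟩)
    simp [this]

omit [FiniteDimensional ℝ A] in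
lemma supp_subset' (Δ : Finset (Module.Dual ℝ A)) (μ : Module.Dual ℝ A) :
    supp Δ μ ⊆ Δ := Finset.filter_subset _ _

end AuxLemmas

/-- `F_Y^Δ ∩ C̃(Δ)` is the union of the chamber faces `E_Z` over
all `Z ⊆ Δ` having `Y` as maximal admissible subset; in particular it contains
`E_Y`. -/
theorem face_inter_closed_chamber (S : RootWeightSystem A)
    (Δ Y : Finset (Module.Dual ℝ A))
    (hΔ : S.toRootWeightData.IsBase Δ) (hY : S.toRootWeightData.Admissible Δ Y) :
    (S.Face Δ Y ∩ Ctilde Δ =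
      ⋃ Z ∈ {Z : Finset (Module.Dual ℝ A) | Z ⊆ Δ ∧ Y ⊆ Z ∧
        ∀ Y' ⊆ Z, S.toRootWeightData.Admissible Δ Y' → Y' ⊆ Y},
        chamberFace Δ Z) ∧
    chamberFace Δ Y ⊆ S.Face Δ Y ∩ Ctilde Δ := by
  have hmain : ∀ Z : Finset (Module.Dual ℝ A), Z ⊆ Δ → Y ⊆ Z →
      (∀ Y' ⊆ Z, S.toRootWeightData.Admissible Δ Y' → Y' ⊆ Y) →
      chamberFace Δ Z ⊆ S.Face Δ Y ∩ Ctilde Δ := by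
    intro Z hZΔ hYZ hmax x hx
    obtain ⟨hxZ, hxpos⟩ := hx
    have hCt : x ∈ Ctilde Δ := by
      intro a ha
      by_cases haZ : a ∈ Z
      · exact le_of_eq (hxZ a haZ).symm
      · exact le_of_lt (hxpos a ha haZ)
    refine ⟨⟨fun a ha => hxZ a (hYZ ha), ?_⟩, hCt⟩
    intro l hl hns
    obtain ⟨hnonneg, heval⟩ := coeffs_key S Δ hΔ l hl
    set μ := S.lam0 Δ - l with hμ
    have hterm : ∀ a ∈ supp Δ μ, 0 ≤ coeffs Δ μ a * a x := by
      intro a ha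
      have haΔ : a ∈ Δ := supp_subset' Δ μ ha
      exact mul_nonneg (hnonneg a haΔ) (hCt a haΔ)
    have hge : 0 ≤ μ x := by rw [heval x]; exact Finset.sum_nonneg hterm
    rcases hge.lt_or_eq with h | h
    · exact h
    · exfalso
      have hzero := (Finset.sum_eq_zero_iff_of_nonneg hterm).mp (by rw [← heval x, ← h])
      have hsuppZ : supp Δ μ ⊆ Z := by
        intro a ha
        have haΔ : a ∈ Δ := supp_subset' Δ μ ha
        have hca : coeffs Δ μ a ≠ 0 := (Finset.mem_filter.mp ha).2
        have hax : a x = 0 := by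
          have := hzero a ha
          rcases mul_eq_zero.mp this with h' | h'
          · exact absurd h' hca
          · exact h'
        by_contra haZ
        exact absurd hax (ne_of_gt (hxpos a haΔ haZ))
      have hadm : S.toRootWeightData.Admissible Δ (supp Δ μ) :=
        ((S.admissible_iff_support Δ hΔ (supp Δ μ) (supp_subset' Δ μ)).mpr ⟨l, hl, rfl⟩)
      exact hns (hmax (supp Δ μ) hsuppZ hadm)
  constructor
  · ext x
    simp only [Set.mem_iUnion, Set.mem_setOf_eq, exists_prop]
    constructor
    · rintro ⟨⟨hface1, hface2⟩, hCt⟩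
      refine ⟨Δ.filter (fun a => a x = 0), ⟨Finset.filter_subset _ _, ?_, ?_⟩, ?_, ?_⟩
      · intro a ha
        exact Finset.mem_filter.mpr ⟨hY.1 ha, hface1 a ha⟩
      · intro Y' hY'Z hY'adm
        by_contra hY'Y
        have hY'Δ : Y' ⊆ Δ := hY'Z.trans (Finset.filter_subset _ _)
        obtain ⟨l, hl, hsupp⟩ :=
          (S.admissible_iff_support Δ hΔ Y' hY'Δ).mp hY'adm
        have hpos := hface2 l hl (by rw [hsupp]; exact hY'Y)
        obtain ⟨_, heval⟩ := coeffs_key S Δ hΔ l hl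
        have : (S.lam0 Δ - l) x = 0 := by
          rw [heval x]
          refine Finset.sum_eq_zero fun a ha => ?_
          have : a x = 0 := by
            have := hY'Z (hsupp ▸ ha)
            exact (Finset.mem_filter.mp this).2
          simp [this]
        linarith
      · intro a ha; exact (Finset.mem_filter.mp ha).2
      · intro a ha haZ
        have hne : a x ≠ 0 := fun h => haZ (Finset.mem_filter.mpr ⟨ha, h⟩)
        exact lt_of_le_of_ne (hCt a ha) (Ne.symm hne)
    · rintro ⟨Z, ⟨hZΔ, hYZ, hmax⟩, hx⟩
      exact hmain Z hZΔ hYZ hmax hx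
  · exact hmain Y hY.1 (le_refl Y) (fun Y' h _ => h)
end
end
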